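/- Let G = (g^{ab}) be a symmetric positive definite real 3×3 matrix and K = (k^{ab}) a symmetric real 3×3 matrix. Suppose H ≥ γ for some γ > 0 and F ≤ η²/4 for some η ∈ [0,1). Then for every Z_η > 0 the function λ_η(p) = −((1−η)γ(p⁰−1) − k^{ab}p_a p_b / p⁰) Z_η satisfies λ_η(p) ≥ 0 for all p ∈ ℝ³. Moreover there is an absolute constant C such that for every orthonormal frame E for G and every a = 1,2,3, |∂λ_η/∂p_a| ≤ C (‖g⁻¹‖‖e⁻¹‖ + ‖k**‖‖e⁻¹‖ + ‖g⁻¹‖‖k**‖‖e⁻¹‖³) Z_η, where ‖k**‖ = max_{a,b}|k^{ab}|. -/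

import Mathlib

open Matrix Real

noncomputable section

/-- 3×3 real matrices. -/
abbrev Mat3 := Matrix (Fin 3) (Fin 3) ℝ
/-- Momentum vectors in ℝ³. -/
abbrev V3 := Fin 3 → ℝ

/-- The quadratic form `g^{ab} p_a p_b = pᵀ G p`. -/
def quadG (G : Mat3) (p : V3) : ℝ := p ⬝ᵥ G *ᵥ p

/-- The quadratic form `k^{ab} p_a p_b`. -/
def quadK (K : Mat3) (p : V3) : ℝ := p ⬝ᵥ K *ᵥ p

/-- The particle energy `p⁰ = √(1 + g^{ab} p_a p_b)`. -/
def p0 (G : Mat3) (p : V3) : ℝ := Real.sqrt (1 + quadG G p)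

/-- The Hubble scalar `H = (1/3) g_{ab} k^{ab}` (indices lowered with `G⁻¹`). -/
def Hub (G K : Mat3) : ℝ := (1 / 3) * ∑ a, ∑ b, G⁻¹ a b * K a b

/-- The shear `σ^{ab} = k^{ab} − H g^{ab}`. -/
def shearUp (G K : Mat3) : Mat3 := K - Hub G K • G

/-- `σ_{ab} σ^{ab}` with `σ_{ab} = g_{ac} g_{bd} σ^{cd}`. -/
def shearSq (G K : Mat3) : ℝ :=
  ∑ a, ∑ b, (G⁻¹ * shearUp G K * G⁻¹) a b * shearUp G K a b

/-- The Hubble-normalized shear variable `F = σ_{ab}σ^{ab}/(4H²)`. -/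
def Fvar (G K : Mat3) : ℝ := shearSq G K / (4 * Hub G K ^ 2)

/-- `λ_η(p) = −((1−η)γ(p⁰−1) − k^{ab}p_a p_b/p⁰) Z_η`. -/
def lamEta (G K : Mat3) (γ η Zη : ℝ) (p : V3) : ℝ :=
  -((1 - η) * γ * (p0 G p - 1) - quadK K p / p0 G p) * Zη

/-- The maximum of the absolute values of the entries of a matrix. -/
def entryNorm (M : Mat3) : ℝ := ⨆ i, ⨆ j, |M i j|

/-! In an orthonormal frame `E` the covector `p` has components `q = E G p`, with
`|q|² = g^{ab}p_a p_b`, and `σ_{ab}σ^{ab}` is the squared Frobenius norm of `E σ Eᵀ`. Writing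
`k^{ab}p_a p_b = H |q|² + qᵀ (E σ Eᵀ) q`, Cauchy–Schwarz and `F ≤ η²/4` give
`k^{ab}p_a p_b ≥ (1 - η) H |q|² ≥ (1 - η) γ ((p⁰)² - 1) ≥ (1 - η) γ (p⁰ - 1) p⁰`, i.e. `λ_η ≥ 0`.

For the derivative, `p = Eᵀ q` and `|q| ≤ p⁰` bound `|p_b|` by `‖e⁻¹‖ p⁰`, so that
`|∂p⁰/∂p_a| ≲ ‖g⁻¹‖‖e⁻¹‖`, `|∂(k^{bc}p_b p_c)/∂p_a| ≲ ‖k**‖‖e⁻¹‖ p⁰`,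
`|k^{bc}p_b p_c| ≲ ‖k**‖‖e⁻¹‖² (p⁰)²` and `γ ≤ H ≲ ‖k**‖‖e⁻¹‖²`; the powers of `p⁰` cancel in
`∂λ_η/∂p_a`. -/

section Frame

variable {n : Type*} [Fintype n] [DecidableEq n] {G E : Matrix n n ℝ}

open scoped MatrixOrder in
theorem exists_frame (hG : G.PosDef) : ∃ E : Matrix n n ℝ, E * G * Eᵀ = 1 := by
  obtain ⟨E, hE⟩ := CStarAlgebra.nonneg_iff_eq_star_mul_self.mp hG.inv.posSemidef.nonneg
  rw [star_eq_conjTranspose, conjTranspose_eq_transpose_of_trivial] at hE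
  refine ⟨E, mul_eq_one_comm.mp ?_⟩
  rw [← Matrix.mul_assoc, ← hE, nonsing_inv_mul _ ((isUnit_iff_isUnit_det G).mp hG.isUnit)]

theorem transpose_mul_mul_eq_one_of_frame (hE : E * G * Eᵀ = 1) : Eᵀ * E * G = 1 := by
  rw [Matrix.mul_assoc]
  exact mul_eq_one_comm.mp hE

theorem inv_eq_transpose_mul_of_frame (hE : E * G * Eᵀ = 1) : G⁻¹ = Eᵀ * E :=
  inv_eq_left_inv (transpose_mul_mul_eq_one_of_frame hE)

theorem transpose_mulVec_frame (hE : E * G * Eᵀ = 1) (p : n → ℝ) :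
    Eᵀ *ᵥ (E *ᵥ (G *ᵥ p)) = p := by
  rw [mulVec_mulVec, mulVec_mulVec, transpose_mul_mul_eq_one_of_frame hE, one_mulVec]

theorem dotProduct_mulVec_eq_frame (hE : E * G * Eᵀ = 1) (M : Matrix n n ℝ) (p : n → ℝ) :
    p ⬝ᵥ M *ᵥ p = (E *ᵥ (G *ᵥ p)) ⬝ᵥ (E * M * Eᵀ) *ᵥ (E *ᵥ (G *ᵥ p)) := by
  have hp := transpose_mulVec_frame hE p
  generalize E *ᵥ (G *ᵥ p) = q at hp ⊢
  subst hp
  rw [← mulVec_mulVec, ← mulVec_mulVec, dotProduct_mulVec q E, mulVec_transpose]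

theorem sum_sum_inv_mul_mul_inv_mul_eq_sum_sq (hE : E * G * Eᵀ = 1) (S : Matrix n n ℝ) :
    ∑ a, ∑ b, (G⁻¹ * S * G⁻¹) a b * S a b = ∑ i, ∑ j, (E * S * Eᵀ) i j ^ 2 := by
  have sum_mul_eq_trace (M N : Matrix n n ℝ) : ∑ a, ∑ b, M a b * N a b = (M * Nᵀ).trace := by
    simp [trace, mul_apply]
  simp only [sq]
  rw [sum_mul_eq_trace, sum_mul_eq_trace, inv_eq_transpose_mul_of_frame hE]
  calc (Eᵀ * E * S * (Eᵀ * E) * Sᵀ).trace = (Eᵀ * (E * S * Eᵀ * E * Sᵀ)).trace := by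
        simp only [Matrix.mul_assoc]
    _ = (E * S * Eᵀ * (E * S * Eᵀ)ᵀ).trace := by
        rw [trace_mul_comm]
        simp only [transpose_mul, transpose_transpose, Matrix.mul_assoc]

end Frame

theorem sq_dotProduct_mulVec_le {n : Type*} [Fintype n] (T : Matrix n n ℝ) (q : n → ℝ) :
    (q ⬝ᵥ T *ᵥ q) ^ 2 ≤ (∑ i, ∑ j, T i j ^ 2) * (q ⬝ᵥ q) ^ 2 := by
  have hqTq : q ⬝ᵥ T *ᵥ q = ∑ x : n × n, T x.1 x.2 * (q x.1 * q x.2) := by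
    simp only [Fintype.sum_prod_type, dotProduct, mulVec, Finset.mul_sum]
    exact Finset.sum_congr rfl fun i _ => Finset.sum_congr rfl fun j _ => by ring
  have hqq : (q ⬝ᵥ q) ^ 2 = ∑ x : n × n, (q x.1 * q x.2) ^ 2 := by
    rw [Fintype.sum_prod_type, dotProduct, sq, Finset.sum_mul_sum]
    exact Finset.sum_congr rfl fun i _ => Finset.sum_congr rfl fun j _ => by ring
  rw [hqTq, hqq, ← Fintype.sum_prod_type' fun i j => T i j ^ 2]
  exact Finset.sum_mul_sq_le_sq_mul_sq _ _ _

theorem abs_sum_le_card_mul {n : Type*} [Fintype n] {f : n → ℝ} {c : ℝ} (hf : ∀ i, |f i| ≤ c) :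
    |∑ i, f i| ≤ Fintype.card n * c :=
  (Finset.abs_sum_le_sum_abs _ _).trans <| (Finset.sum_le_sum fun i _ => hf i).trans_eq (by simp)

theorem abs_dotProduct_le {n : Type*} [Fintype n] {x y : n → ℝ} {A B : ℝ}
    (hx : ∀ i, |x i| ≤ A) (hy : ∀ i, |y i| ≤ B) : |x ⬝ᵥ y| ≤ Fintype.card n * (A * B) :=
  abs_sum_le_card_mul fun i => (abs_mul _ _).trans_le <|
    mul_le_mul (hx i) (hy i) (abs_nonneg _) ((abs_nonneg _).trans (hx i))

theorem abs_le_entryNorm (M : Mat3) (i j : Fin 3) : |M i j| ≤ entryNorm M :=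
  (Finite.le_ciSup (fun j => |M i j|) j).trans (Finite.le_ciSup (fun i => ⨆ j, |M i j|) i)

theorem entryNorm_nonneg (M : Mat3) : 0 ≤ entryNorm M :=
  (abs_nonneg _).trans (abs_le_entryNorm M 0 0)

theorem quadK_eq_hub_mul_quadG_add_shear (G K : Mat3) (p : V3) :
    quadK K p = Hub G K * quadG G p + p ⬝ᵥ shearUp G K *ᵥ p := by
  simp only [quadK, quadG, shearUp, sub_mulVec, smul_mulVec, dotProduct_sub, dotProduct_smul,
    smul_eq_mul]
  ring

theorem shearSq_le_of_Fvar_le {G K : Mat3} {η : ℝ} (hH : 0 < Hub G K)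
    (hF : Fvar G K ≤ η ^ 2 / 4) : shearSq G K ≤ η ^ 2 * Hub G K ^ 2 := by
  rw [Fvar, div_le_iff₀ (by positivity)] at hF
  linarith

section Mat3Frame

variable {G K E : Mat3}

theorem quadG_eq_frame (hE : E * G * Eᵀ = 1) (p : V3) :
    quadG G p = (E *ᵥ (G *ᵥ p)) ⬝ᵥ (E *ᵥ (G *ᵥ p)) := by
  rw [quadG, dotProduct_mulVec_eq_frame hE G p, hE, one_mulVec]

theorem quadG_nonneg (hE : E * G * Eᵀ = 1) (p : V3) : 0 ≤ quadG G p := by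
  rw [quadG_eq_frame hE]
  exact dotProduct_self_star_nonneg _

theorem one_le_p0 (hE : E * G * Eᵀ = 1) (p : V3) : 1 ≤ p0 G p :=
  Real.one_le_sqrt.mpr (le_add_of_nonneg_right (quadG_nonneg hE p))

theorem p0_sq (hE : E * G * Eᵀ = 1) (p : V3) : p0 G p ^ 2 = 1 + quadG G p :=
  Real.sq_sqrt (by linarith [quadG_nonneg hE p])

theorem abs_frame_apply_le_p0 (hE : E * G * Eᵀ = 1) (p : V3) (i : Fin 3) :
    |(E *ᵥ (G *ᵥ p)) i| ≤ p0 G p := by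
  set q := E *ᵥ (G *ᵥ p)
  have hqi : q i * q i ≤ q ⬝ᵥ q :=
    Finset.single_le_sum (f := fun j => q j * q j) (fun j _ => mul_self_nonneg _)
      (Finset.mem_univ i)
  rw [← Real.sqrt_mul_self_eq_abs]
  exact Real.sqrt_le_sqrt (by rw [quadG_eq_frame hE]; linarith)

theorem abs_apply_le_entryNorm_mul_p0 (hE : E * G * Eᵀ = 1) (p : V3) (b : Fin 3) :
    |p b| ≤ 3 * entryNorm E * p0 G p := by
  have hpb : p b = (fun i => E i b) ⬝ᵥ (E *ᵥ (G *ᵥ p)) := by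
    conv_lhs => rw [← transpose_mulVec_frame hE p]
    rfl
  rw [hpb]
  simpa [mul_assoc] using abs_dotProduct_le (fun i => abs_le_entryNorm E i b)
    (abs_frame_apply_le_p0 hE p)

theorem abs_mulVec_apply_le (hE : E * G * Eᵀ = 1) {M : Mat3} {m : ℝ} (hM : ∀ i j, |M i j| ≤ m)
    (p : V3) (b : Fin 3) : |(M *ᵥ p) b| ≤ 9 * m * entryNorm E * p0 G p := by
  calc |(M *ᵥ p) b| = |M b ⬝ᵥ p| := rfl
    _ ≤ 3 * (m * (3 * entryNorm E * p0 G p)) := by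
        simpa using abs_dotProduct_le (hM b) (abs_apply_le_entryNorm_mul_p0 hE p)
    _ = 9 * m * entryNorm E * p0 G p := by ring

theorem abs_dotProduct_mulVec_single_add_le (hE : E * G * Eᵀ = 1) (M : Mat3) (p : V3) (a : Fin 3) :
    |p ⬝ᵥ M *ᵥ Pi.single a 1 + Pi.single a 1 ⬝ᵥ M *ᵥ p|
      ≤ 18 * entryNorm M * entryNorm E * p0 G p := by
  rw [dotProduct_mulVec, dotProduct_single, single_dotProduct, mul_one, one_mul,
    ← mulVec_transpose]
  have hMt := abs_mulVec_apply_le hE (M := Mᵀ) (fun i j => abs_le_entryNorm M j i) p a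
  have hM := abs_mulVec_apply_le hE (abs_le_entryNorm M) p a
  linarith [abs_add_le ((Mᵀ *ᵥ p) a) ((M *ᵥ p) a)]

theorem abs_quadK_le (hE : E * G * Eᵀ = 1) (M : Mat3) (p : V3) :
    |quadK M p| ≤ 81 * entryNorm M * entryNorm E ^ 2 * p0 G p ^ 2 := by
  calc |quadK M p|
        ≤ 3 * (3 * entryNorm E * p0 G p * (9 * entryNorm M * entryNorm E * p0 G p)) :=
        (abs_dotProduct_le (abs_apply_le_entryNorm_mul_p0 hE p)
          (abs_mulVec_apply_le hE (abs_le_entryNorm M) p)).trans_eq (by simp)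
    _ = 81 * entryNorm M * entryNorm E ^ 2 * p0 G p ^ 2 := by ring

theorem hub_le_entryNorm (hE : E * G * Eᵀ = 1) : Hub G K ≤ 9 * entryNorm K * entryNorm E ^ 2 := by
  have hGinv (a b : Fin 3) : |G⁻¹ a b| ≤ 3 * (entryNorm E * entryNorm E) := by
    rw [inv_eq_transpose_mul_of_frame hE]
    exact (abs_dotProduct_le (fun i => abs_le_entryNorm E i a)
      (fun i => abs_le_entryNorm E i b)).trans_eq (by simp)
  have hsum : |∑ a, ∑ b, G⁻¹ a b * K a b| ≤ 3 * (3 * (3 * (entryNorm E * entryNorm E) *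
      entryNorm K)) :=
    (abs_sum_le_card_mul fun a => abs_dotProduct_le (hGinv a)
      (abs_le_entryNorm K a)).trans_eq (by simp)
  rw [Hub]
  linarith [le_abs_self (∑ a, ∑ b, G⁻¹ a b * K a b)]

theorem abs_dotProduct_shearUp_le (hE : E * G * Eᵀ = 1) {η : ℝ} (hη : 0 ≤ η) (hH : 0 ≤ Hub G K)
    (hσ : shearSq G K ≤ η ^ 2 * Hub G K ^ 2) (p : V3) :
    |p ⬝ᵥ shearUp G K *ᵥ p| ≤ η * Hub G K * quadG G p := by
  rw [dotProduct_mulVec_eq_frame hE, quadG_eq_frame hE]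
  set q := E *ᵥ (G *ᵥ p)
  set T := E * shearUp G K * Eᵀ
  have hq : 0 ≤ q ⬝ᵥ q := dotProduct_self_star_nonneg q
  refine abs_le_of_sq_le_sq ?_ (by positivity)
  calc (q ⬝ᵥ T *ᵥ q) ^ 2 ≤ (∑ i, ∑ j, T i j ^ 2) * (q ⬝ᵥ q) ^ 2 := sq_dotProduct_mulVec_le T q
    _ = shearSq G K * (q ⬝ᵥ q) ^ 2 := by rw [shearSq, sum_sum_inv_mul_mul_inv_mul_eq_sum_sq hE]
    _ ≤ η ^ 2 * Hub G K ^ 2 * (q ⬝ᵥ q) ^ 2 := by gcongr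
    _ = (η * Hub G K * (q ⬝ᵥ q)) ^ 2 := by ring

theorem lamEta_nonneg (hE : E * G * Eᵀ = 1) {γ η Zη : ℝ} (hγ : 0 < γ) (hη0 : 0 ≤ η)
    (hη1 : η < 1) (hH : γ ≤ Hub G K) (hF : Fvar G K ≤ η ^ 2 / 4) (hZ : 0 ≤ Zη) (p : V3) :
    0 ≤ lamEta G K γ η Zη p := by
  have hH0 : 0 < Hub G K := hγ.trans_le hH
  have hshear := abs_dotProduct_shearUp_le hE hη0 hH0.le (shearSq_le_of_Fvar_le hH0 hF) p
  have hs := one_le_p0 hE p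
  have hs2 := p0_sq hE p
  have hQ := quadG_nonneg hE p
  have key : (1 - η) * γ * (p0 G p - 1) * p0 G p ≤ quadK K p := by
    calc (1 - η) * γ * (p0 G p - 1) * p0 G p ≤ (1 - η) * γ * quadG G p := by
          rw [mul_assoc _ (p0 G p - 1)]
          gcongr
          nlinarith
      _ ≤ (1 - η) * Hub G K * quadG G p := by gcongr
      _ ≤ quadK K p := by
          rw [quadK_eq_hub_mul_quadG_add_shear G K p]
          linarith [neg_abs_le (p ⬝ᵥ shearUp G K *ᵥ p)]
  refine mul_nonneg ?_ hZ
  rw [neg_nonneg, sub_nonpos, le_div_iff₀ (by linarith)]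
  exact key

end Mat3Frame

theorem hasDerivAt_dotProduct_mulVec_line {n : Type*} [Fintype n] (M : Matrix n n ℝ)
    (p v : n → ℝ) :
    HasDerivAt (fun t : ℝ => (p + t • v) ⬝ᵥ M *ᵥ (p + t • v)) (p ⬝ᵥ M *ᵥ v + v ⬝ᵥ M *ᵥ p) 0 := by
  have hexp : (fun t : ℝ => (p + t • v) ⬝ᵥ M *ᵥ (p + t • v)) = fun t =>
      p ⬝ᵥ M *ᵥ p + (p ⬝ᵥ M *ᵥ v + v ⬝ᵥ M *ᵥ p) * t + v ⬝ᵥ M *ᵥ v * t ^ 2 := by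
    funext t
    simp only [mulVec_add, mulVec_smul, dotProduct_add, add_dotProduct, dotProduct_smul,
      smul_dotProduct, smul_eq_mul]
    ring
  rw [hexp]
  refine ((((hasDerivAt_id (0 : ℝ)).const_mul _).const_add _).add
    ((hasDerivAt_pow 2 (0 : ℝ)).const_mul (v ⬝ᵥ M *ᵥ v))).congr_deriv ?_
  simp

section Derivative

variable {G K E : Mat3}

theorem hasDerivAt_p0_line (hE : E * G * Eᵀ = 1) (p v : V3) :
    HasDerivAt (fun t : ℝ => p0 G (p + t • v))
      ((p ⬝ᵥ G *ᵥ v + v ⬝ᵥ G *ᵥ p) / (2 * p0 G p)) 0 := by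
  have hne : 1 + quadG G (p + (0 : ℝ) • v) ≠ 0 := by
    rw [zero_smul, add_zero]
    linarith [quadG_nonneg hE p]
  refine (((hasDerivAt_dotProduct_mulVec_line G p v).const_add 1).sqrt hne).congr_deriv ?_
  rw [show p + (0 : ℝ) • v = p by simp]
  rfl

theorem hasDerivAt_lamEta_line (hE : E * G * Eᵀ = 1) (γ η Zη : ℝ) (p v : V3) :
    HasDerivAt (fun t : ℝ => lamEta G K γ η Zη (p + t • v))
      (-((1 - η) * γ * ((p ⬝ᵥ G *ᵥ v + v ⬝ᵥ G *ᵥ p) / (2 * p0 G p))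
        - ((p ⬝ᵥ K *ᵥ v + v ⬝ᵥ K *ᵥ p) * p0 G p
          - quadK K p * ((p ⬝ᵥ G *ᵥ v + v ⬝ᵥ G *ᵥ p) / (2 * p0 G p))) / p0 G p ^ 2) * Zη) 0 := by
  have hp0 := hasDerivAt_p0_line hE p v
  have h := (((hp0.sub_const 1).const_mul ((1 - η) * γ)).sub
    ((hasDerivAt_dotProduct_mulVec_line K p v).div hp0
      (by simpa using (zero_lt_one.trans_le (one_le_p0 hE p)).ne'))).neg.mul_const Zη
  refine h.congr_deriv ?_
  rw [show p + (0 : ℝ) • v = p by simp]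
  rfl

end Derivative

theorem abs_lamEta_deriv_formula_le {c γ Z s d dK Q g k e : ℝ} (hc0 : 0 ≤ c) (hc1 : c ≤ 1)
    (hγ : 0 ≤ γ) (hZ : 0 ≤ Z) (hs : 1 ≤ s) (hg : 0 ≤ g) (hk : 0 ≤ k) (he : 0 ≤ e)
    (hd : |d| ≤ 9 * g * e) (hdK : |dK| ≤ 18 * k * e * s) (hQ : |Q| ≤ 81 * k * e ^ 2 * s ^ 2)
    (hγk : γ ≤ 9 * k * e ^ 2) :
    |-(c * γ * d - (dK * s - Q * d) / s ^ 2) * Z| ≤ 1000 * (g * e + k * e + g * k * e ^ 3) * Z := by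
  have hs0 : 0 < s := by linarith
  have hsplit : -(c * γ * d - (dK * s - Q * d) / s ^ 2) = dK / s - c * γ * d - Q / s ^ 2 * d := by
    field_simp
    ring
  have hdK' : |dK / s| ≤ 18 * k * e := by
    rw [abs_div, abs_of_pos hs0, div_le_iff₀ hs0]
    linarith
  have hγd : |c * γ * d| ≤ 1 * (9 * k * e ^ 2) * (9 * g * e) := by
    rw [abs_mul, abs_mul, abs_of_nonneg hc0, abs_of_nonneg hγ]
    gcongr
  have hQd : |Q / s ^ 2 * d| ≤ 81 * k * e ^ 2 * (9 * g * e) := by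
    rw [abs_mul, abs_div, abs_of_pos (by positivity : 0 < s ^ 2)]
    gcongr
    rw [div_le_iff₀ (by positivity)]
    exact hQ
  rw [abs_mul, abs_of_nonneg hZ, hsplit]
  gcongr ?_ * Z
  have htri := (abs_sub _ _).trans (add_le_add_left (abs_sub (dK / s) (c * γ * d)) |Q / s ^ 2 * d|)
  linarith [mul_nonneg (mul_nonneg hg hk) (pow_nonneg he 3), mul_nonneg hg he, mul_nonneg hk he]

/-- if `H ≥ γ > 0` and `F ≤ η²/4` with `η ∈ [0,1)`, then `λ_η ≥ 0`, and there
is an absolute constant `C` such that for every orthonormal frame `E` for `G`, all `p` and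
every direction `a`, `|∂λ_η/∂p_a| ≤ C(‖g⁻¹‖‖e⁻¹‖ + ‖k**‖‖e⁻¹‖ + ‖g⁻¹‖‖k**‖‖e⁻¹‖³) Z_η`. -/
theorem stmt5 :
    ∃ C > (0 : ℝ), ∀ (G K : Mat3), G.PosDef → K.IsSymm →
      ∀ γ η : ℝ, 0 < γ → 0 ≤ η → η < 1 → γ ≤ Hub G K → Fvar G K ≤ η ^ 2 / 4 →
      ∀ Zη : ℝ, 0 < Zη →
        (∀ p : V3, 0 ≤ lamEta G K γ η Zη p) ∧
        ∀ E : Mat3, E * G * Eᵀ = 1 → ∀ p : V3, ∀ a : Fin 3,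
          DifferentiableAt ℝ (fun t : ℝ => lamEta G K γ η Zη (p + t • (Pi.single a 1 : V3))) 0 ∧
          |deriv (fun t : ℝ => lamEta G K γ η Zη (p + t • (Pi.single a 1 : V3))) 0|
            ≤ C * (entryNorm G * entryNorm E + entryNorm K * entryNorm E
                + entryNorm G * entryNorm K * entryNorm E ^ 3) * Zη := by
  refine ⟨1000, by norm_num, fun G K hG _ γ η hγ hη0 hη1 hH hF Zη hZ => ⟨fun p => ?_, ?_⟩⟩
  · obtain ⟨E, hE⟩ := exists_frame hG
    exact lamEta_nonneg hE hγ hη0 hη1 hH hF hZ.le p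
  intro E hE p a
  have hderiv := hasDerivAt_lamEta_line (K := K) hE γ η Zη p (Pi.single a 1)
  refine ⟨hderiv.differentiableAt, hderiv.deriv ▸ ?_⟩
  have hs := one_le_p0 hE p
  have hs0 : 0 < 2 * p0 G p := by linarith
  refine abs_lamEta_deriv_formula_le (by linarith) (by linarith) hγ.le hZ.le hs
    (entryNorm_nonneg G) (entryNorm_nonneg K) (entryNorm_nonneg E) ?_
    (abs_dotProduct_mulVec_single_add_le hE K p a) (abs_quadK_le hE K p)
    (hH.trans (hub_le_entryNorm hE))
  rw [abs_div, abs_of_pos hs0, div_le_iff₀ hs0]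
  linarith [abs_dotProduct_mulVec_single_add_le hE G p a]
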